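/- Let (R, α) be a multiplicative Hom-Lie conformal superalgebra. Then ZDer(R) is an ideal of Der(R): for D₁ ∈ ZDer_{α^k}(R) one has α'(D₁) = D₁ ∘ α ∈ ZDer_{α^{k+1}}(R), and for D₁ ∈ ZDer_{α^k}(R) and D₂ ∈ Der_{α^s}(R) the commutator [D₁_μ D₂] lies in ZDer_{α^{k+s}}(R)[μ]. -/

import Mathlib

noncomputable section

namespace HLCS

open scoped BigOperators

/-- Evaluation at `l : ℂ` of a polynomial (in `λ`) with coefficients in `M`,
encoded as a finitely supported family of coefficients. -/
def pev {M : Type} [AddCommGroup M] [Module ℂ M] (l : ℂ) (p : ℕ →₀ M) : M :=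
  p.sum fun n r => l ^ n • r

/-- Evaluation of a polynomial with coefficients in `M` at an operator `T`
(used for substitutions such as `-λ - ∂`). -/
def pevOp {M : Type} [AddCommGroup M] [Module ℂ M] (T : Module.End ℂ M) (p : ℕ →₀ M) : M :=
  p.sum fun n r => (T ^ n) r

/-- The super sign `(-1)^{|a||b|}` attached to parities `i`, `j`. -/
def sg (i j : ZMod 2) : ℂ := (-1 : ℂ) ^ (i * j).val

/-- The data of a `ℤ₂`-graded `ℂ[∂]`-module `R` with an endomorphism `α` and a
`ℂ`-bilinear `λ`-bracket with values in `ℂ[λ] ⊗ R` (encoded by its coefficients). -/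
structure Data (R : Type) [AddCommGroup R] [Module ℂ R] where
  der : Module.End ℂ R
  alpha : Module.End ℂ R
  G : ZMod 2 → Submodule ℂ R
  br : R →ₗ[ℂ] R →ₗ[ℂ] (ℕ →₀ R)

namespace Data

variable {R : Type} [AddCommGroup R] [Module ℂ R] (S : Data R)

/-- `[a_λ b]` evaluated at `λ = l`. -/
def lb (l : ℂ) (a b : R) : R := pev l (S.br a b)

/-- `[a_{-l-∂} b]` : the bracket with `-l - ∂` substituted for `λ`. -/
def lbOp (l : ℂ) (a b : R) : R :=
  pevOp ((-l) • (1 : Module.End ℂ R) - S.der) (S.br a b)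

/-- Multiplicativity: `α [a_λ b] = [α(a)_λ α(b)]`. -/
def Mult : Prop := ∀ (l : ℂ) (a b : R), S.alpha (S.lb l a b) = S.lb l (S.alpha a) (S.alpha b)

end Data

variable {R : Type} [AddCommGroup R] [Module ℂ R]

/-- `(R, α)` with the given data is a Hom-Lie conformal superalgebra.
All polynomial identities in `λ, μ` are stated by evaluating at arbitrary
complex numbers (which is equivalent, `ℂ` being infinite). -/
structure IsHLCS (S : Data R) : Prop where
  internal : DirectSum.IsInternal S.G
  der_even : ∀ i, ∀ a ∈ S.G i, S.der a ∈ S.G i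
  alpha_even : ∀ i, ∀ a ∈ S.G i, S.alpha a ∈ S.G i
  alpha_der : ∀ a, S.alpha (S.der a) = S.der (S.alpha a)
  br_grade : ∀ i j, ∀ a ∈ S.G i, ∀ b ∈ S.G j, ∀ n, S.br a b n ∈ S.G (i + j)
  conf_left : ∀ (l : ℂ) (a b : R), S.lb l (S.der a) b = -l • S.lb l a b
  conf_right : ∀ (l : ℂ) (a b : R), S.lb l a (S.der b) = S.der (S.lb l a b) + l • S.lb l a b
  skew : ∀ i j, ∀ a ∈ S.G i, ∀ b ∈ S.G j, ∀ l : ℂ,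
    S.lb l a b = (-sg i j) • S.lbOp l b a
  jacobi : ∀ i j, ∀ a ∈ S.G i, ∀ b ∈ S.G j, ∀ (c : R) (l m : ℂ),
    S.lb l (S.alpha a) (S.lb m b c) =
      S.lb (l + m) (S.lb l a b) (S.alpha c) + sg i j • S.lb m (S.alpha b) (S.lb l a c)

end HLCS
namespace HLCS

variable {R : Type} [AddCommGroup R] [Module ℂ R]

/-- A homogeneous conformal linear map of parity `d` on `R`, encoded as the family of
its evaluations `F l : R → R` (`l : ℂ`): it is `ℂ`-linear, polynomial in `l`, and
satisfies `F_λ(∂a) = (∂ + λ) F_λ(a)`. -/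
structure IsConfMap (S : Data R) (d : ZMod 2) (F : ℂ → R → R) : Prop where
  map_add : ∀ (l : ℂ) (a b : R), F l (a + b) = F l a + F l b
  map_smul : ∀ (l c : ℂ) (a : R), F l (c • a) = c • F l a
  poly : ∀ a : R, ∃ p : ℕ →₀ R, ∀ l : ℂ, F l a = pev l p
  conf : ∀ (l : ℂ) (a : R), F l (S.der a) = S.der (F l a) + l • F l a
  grade : ∀ i, ∀ a ∈ S.G i, ∀ l : ℂ, F l a ∈ S.G (i + d)

/-- Membership in `Ω`: a homogeneous conformal linear map commuting with `α`. -/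
def InOmega (S : Data R) (d : ZMod 2) (F : ℂ → R → R) : Prop :=
  IsConfMap S d F ∧ ∀ (l : ℂ) (a : R), F l (S.alpha a) = S.alpha (F l a)

/-- An `α^k`-derivation of parity `d`. -/
def IsDer (S : Data R) (k : ℕ) (d : ZMod 2) (F : ℂ → R → R) : Prop :=
  InOmega S d F ∧ ∀ i, ∀ a ∈ S.G i, ∀ (b : R) (l m : ℂ),
    F l (S.lb m a b) =
      S.lb (l + m) (F l a) ((S.alpha ^ k) b) +
        ((-1 : ℂ) ^ ((i * d).val)) • S.lb m ((S.alpha ^ k) a) (F l b)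

/-- The commutator `[D_λ D']_μ (a) = D_λ(D'_{μ-λ}(a)) - (-1)^{|D||D'|} D'_{μ-λ}(D_λ(a))`,
with `e = (-1)^{|D||D'|}`; first argument `l` is `λ`, second `m` is `μ`. -/
def brkt (e : ℂ) (F G : ℂ → R → R) : ℂ → ℂ → R → R :=
  fun l m a => F l (G (m - l) a) - e • G (m - l) (F l a)

/-- The twist `α'(D) = D ∘ α`. -/
def tw (S : Data R) (F : ℂ → R → R) : ℂ → R → R := fun l a => F l (S.alpha a)

/-- A generalized `α^k`-derivation of parity `d`. -/
def IsGDer (S : Data R) (k : ℕ) (d : ZMod 2) (F : ℂ → R → R) : Prop :=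
  InOmega S d F ∧ ∃ F' F'' : ℂ → R → R, InOmega S d F' ∧ InOmega S d F'' ∧
    ∀ i, ∀ a ∈ S.G i, ∀ (b : R) (l m : ℂ),
      S.lb (l + m) (F m a) ((S.alpha ^ k) b) +
        ((-1 : ℂ) ^ ((d * i).val)) • S.lb l ((S.alpha ^ k) a) (F' m b) = F'' m (S.lb l a b)

/-- An `α^k`-quasiderivation of parity `d`. -/
def IsQDer (S : Data R) (k : ℕ) (d : ZMod 2) (F : ℂ → R → R) : Prop :=
  InOmega S d F ∧ ∃ F' : ℂ → R → R, InOmega S d F' ∧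
    ∀ i, ∀ a ∈ S.G i, ∀ (b : R) (l m : ℂ),
      S.lb (l + m) (F m a) ((S.alpha ^ k) b) +
        ((-1 : ℂ) ^ ((d * i).val)) • S.lb l ((S.alpha ^ k) a) (F m b) = F' m (S.lb l a b)

/-- An `α^k`-centroid of parity `d`. -/
def IsCent (S : Data R) (k : ℕ) (d : ZMod 2) (F : ℂ → R → R) : Prop :=
  InOmega S d F ∧ ∀ i, ∀ a ∈ S.G i, ∀ (b : R) (l m : ℂ),
    S.lb (l + m) (F m a) ((S.alpha ^ k) b) =
      ((-1 : ℂ) ^ ((d * i).val)) • S.lb l ((S.alpha ^ k) a) (F m b) ∧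
    S.lb (l + m) (F m a) ((S.alpha ^ k) b) = F m (S.lb l a b)

/-- An `α^k`-quasicentroid of parity `d`. -/
def IsQC (S : Data R) (k : ℕ) (d : ZMod 2) (F : ℂ → R → R) : Prop :=
  InOmega S d F ∧ ∀ i, ∀ a ∈ S.G i, ∀ (b : R) (l m : ℂ),
    S.lb (l + m) (F m a) ((S.alpha ^ k) b) =
      ((-1 : ℂ) ^ ((d * i).val)) • S.lb l ((S.alpha ^ k) a) (F m b)

/-- An `α^k`-central derivation of parity `d`. -/
def IsZDer (S : Data R) (k : ℕ) (d : ZMod 2) (F : ℂ → R → R) : Prop :=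
  InOmega S d F ∧ ∀ (a b : R) (l m : ℂ),
    S.lb (l + m) (F m a) ((S.alpha ^ k) b) = 0 ∧ F m (S.lb l a b) = 0

/-- Membership in the center `Z(R)`. -/
def IsCentral (S : Data R) (x : R) : Prop := ∀ (l : ℂ) (y : R), S.lb l x y = 0

end HLCS
namespace HLCS

variable {R : Type} [AddCommGroup R] [Module ℂ R]

/-! A central derivation `F` kills every bracket it enters, on either side. For a derivation `G`,
expanding `G [F a_λ α^k b] = 0` by the derivation rule leaves `[G (F a)_λ α^(k+s) b]` plus a
bracket `[F (α^s a)_μ …]`, which vanishes; and `G [a_λ b]` expands into two brackets, each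
killed by `F`. The derivation rule only holds for homogeneous `a`, so these vanishing
statements are proved on the homogeneous components and extended by additivity. -/

def pevL (l : ℂ) : (ℕ →₀ R) →ₗ[ℂ] R :=
  Finsupp.lsum ℂ fun n => l ^ n • (LinearMap.id : R →ₗ[ℂ] R)

lemma pev_eq_pevL (l : ℂ) (p : ℕ →₀ R) : pev l p = pevL l p := rfl

lemma pev_single (l : ℂ) (n : ℕ) (r : R) : pev l (Finsupp.single n r) = l ^ n • r := by
  rw [pev, Finsupp.sum_single_index (by simp)]

lemma map_pev (T : R →ₗ[ℂ] R) (l : ℂ) (p : ℕ →₀ R) :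
    T (pev l p) = pev l (Finsupp.mapRange T T.map_zero p) := by
  rw [pev, pev, Finsupp.sum_mapRange_index (by simp), map_finsuppSum]
  simp

/-- Binomial expansion of `(m - l₀)^n`. -/
lemma exists_pev_sub (l₀ : ℂ) (p : ℕ →₀ R) :
    ∃ q : ℕ →₀ R, ∀ m : ℂ, pev (m - l₀) p = pev m q := by
  refine ⟨∑ n ∈ p.support, ∑ i ∈ Finset.range (n + 1),
      Finsupp.single i (((-l₀) ^ (n - i) * (n.choose i : ℂ)) • p n), fun m => ?_⟩
  rw [pev_eq_pevL m, map_sum, pev, Finsupp.sum]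
  refine Finset.sum_congr rfl fun n _ => ?_
  simp only [map_sum, ← pev_eq_pevL, pev_single, smul_smul, ← Finset.sum_smul]
  rw [sub_eq_add_neg, add_pow]
  exact congrArg (· • p n) (Finset.sum_congr rfl fun i _ => by ring)

lemma eq_zero_of_forall_mem_eq_zero {ι M : Type} [AddCommGroup M] {G : ι → Submodule ℂ R}
    (hG : ⨆ i, G i = ⊤) (φ : R → M) (hadd : ∀ x y, φ (x + y) = φ x + φ y)
    (h : ∀ i, ∀ x ∈ G i, φ x = 0) (a : R) : φ a = 0 := by
  let φ' : R →+ M := AddMonoidHom.mk' φ hadd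
  have ha : a ∈ ⨆ i, G i := hG ▸ Submodule.mem_top
  exact Submodule.iSup_induction G (motive := fun x => φ' x = 0) ha h φ'.map_zero
    fun x y hx hy => by rw [φ'.map_add, hx, hy, add_zero]

namespace Data

variable (S : Data R)

lemma lb_eq_compr₂ (l : ℂ) (a b : R) : S.lb l a b = S.br.compr₂ (pevL l) a b := rfl

lemma lb_add_left (l : ℂ) (a a' b : R) : S.lb l (a + a') b = S.lb l a b + S.lb l a' b := by
  simp only [lb_eq_compr₂, map_add, LinearMap.add_apply]

lemma lb_sub_left (l : ℂ) (a a' b : R) : S.lb l (a - a') b = S.lb l a b - S.lb l a' b := by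
  simp only [lb_eq_compr₂, map_sub, LinearMap.sub_apply]

lemma lb_smul_left (l c : ℂ) (a b : R) : S.lb l (c • a) b = c • S.lb l a b := by
  simp only [lb_eq_compr₂, map_smul, LinearMap.smul_apply]

lemma alpha_pow_add (k s : ℕ) (b : R) :
    (S.alpha ^ (k + s)) b = (S.alpha ^ k) ((S.alpha ^ s) b) := by
  rw [pow_add, Module.End.mul_apply]

end Data

variable {S : Data R} {d d' : ZMod 2} {F G : ℂ → R → R}

namespace IsConfMap

def toLinearMap (hF : IsConfMap S d F) (l : ℂ) : R →ₗ[ℂ] R where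
  toFun := F l
  map_add' := hF.map_add l
  map_smul' := hF.map_smul l

lemma map_zero (hF : IsConfMap S d F) (l : ℂ) : F l 0 = 0 :=
  (hF.toLinearMap l).map_zero

lemma tw (hS : IsHLCS S) (hF : IsConfMap S d F) : IsConfMap S d (tw S F) where
  map_add l a b := by simp only [HLCS.tw, _root_.map_add, hF.map_add]
  map_smul l c a := by simp only [HLCS.tw, _root_.map_smul, hF.map_smul]
  poly a := hF.poly (S.alpha a)
  conf l a := by simp only [HLCS.tw, hS.alpha_der, hF.conf]
  grade i a ha l := hF.grade i _ (hS.alpha_even i a ha) l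

lemma brkt (hF : IsConfMap S d F) (hG : IsConfMap S d' G) (e l₀ : ℂ) :
    IsConfMap S (d + d') (brkt e F G l₀) where
  map_add l a b := by
    simp only [HLCS.brkt, hF.map_add, hG.map_add, smul_add]
    abel
  map_smul l c a := by
    simp only [HLCS.brkt, hF.map_smul, hG.map_smul, smul_comm e c, smul_sub]
  poly a := by
    obtain ⟨p₁, hp₁⟩ := hG.poly a
    obtain ⟨q₁, hq₁⟩ := exists_pev_sub l₀ p₁
    obtain ⟨p₂, hp₂⟩ := hG.poly (F l₀ a)
    obtain ⟨q₂, hq₂⟩ := exists_pev_sub l₀ p₂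
    refine ⟨Finsupp.mapRange (hF.toLinearMap l₀) (LinearMap.map_zero _) q₁ - e • q₂,
      fun m => ?_⟩
    have hFq₁ : F l₀ (pev m q₁) = hF.toLinearMap l₀ (pev m q₁) := rfl
    rw [HLCS.brkt, hp₁, hq₁, hp₂, hq₂, hFq₁, map_pev]
    simp only [pev_eq_pevL, _root_.map_sub, _root_.map_smul]
  conf l a := by
    simp only [HLCS.brkt, hF.conf, hG.conf, hF.map_add, hF.map_smul, hG.map_add, hG.map_smul,
      _root_.map_sub, _root_.map_smul]
    module
  grade i a ha l := by
    have h₁ := hF.grade _ _ (hG.grade i a ha (l - l₀)) l₀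
    have h₂ := hG.grade _ _ (hF.grade i a ha l₀) (l - l₀)
    rw [add_assoc, add_comm d'] at h₁
    rw [add_assoc] at h₂
    exact Submodule.sub_mem _ h₁ (Submodule.smul_mem _ e h₂)

end IsConfMap

namespace InOmega

lemma commute_alpha_pow (hF : InOmega S d F) (l : ℂ) (n : ℕ) :
    Function.Commute (F l) ⇑(S.alpha ^ n) := by
  rw [Module.End.coe_pow]
  exact Function.Commute.iterate_right (hF.2 l) n

lemma tw (hS : IsHLCS S) (hF : InOmega S d F) : InOmega S d (tw S F) :=
  ⟨hF.1.tw hS, fun l a => hF.2 l (S.alpha a)⟩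

lemma brkt (hF : InOmega S d F) (hG : InOmega S d' G) (e l₀ : ℂ) :
    InOmega S (d + d') (brkt e F G l₀) :=
  ⟨hF.1.brkt hG.1 e l₀, fun l a => by simp only [HLCS.brkt, hF.2, hG.2, map_sub, map_smul]⟩

end InOmega

namespace IsZDer

variable {k s : ℕ}

lemma lb_apply_eq_zero (hF : IsZDer S k d F) (l₀ p : ℂ) (a b : R) :
    S.lb p (F l₀ a) ((S.alpha ^ k) b) = 0 := by
  simpa only [sub_add_cancel] using (hF.2 a b (p - l₀) l₀).1

lemma apply_lb_eq_zero (hF : IsZDer S k d F) (l m : ℂ) (a b : R) : F m (S.lb l a b) = 0 :=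
  (hF.2 a b l m).2

lemma tw (hS : IsHLCS S) (hmult : S.Mult) (hF : IsZDer S k d F) : IsZDer S (k + 1) d (tw S F) :=
  ⟨hF.1.tw hS, fun a b l m =>
    ⟨by simpa only [HLCS.tw, pow_succ, Module.End.mul_apply] using
        hF.lb_apply_eq_zero m (l + m) (S.alpha a) (S.alpha b),
      by rw [HLCS.tw, hmult l a b, hF.apply_lb_eq_zero]⟩⟩

lemma lb_der_apply_eq_zero (hS : IsHLCS S) (hF : IsZDer S k d F) (hG : IsDer S s d' G)
    (l₀ ν p : ℂ) (a b : R) : S.lb p (G ν (F l₀ a)) ((S.alpha ^ (k + s)) b) = 0 := by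
  refine eq_zero_of_forall_mem_eq_zero hS.internal.submodule_iSup_eq_top
    (fun x => S.lb p (G ν (F l₀ x)) _)
    (fun x y => by simp only [hF.1.1.map_add, hG.1.1.map_add, S.lb_add_left]) ?_ a
  intro i x hx
  have key := hG.2 (i + d) (F l₀ x) (hF.1.1.grade i x hx l₀) ((S.alpha ^ k) b) ν (p - ν)
  rwa [hF.lb_apply_eq_zero, hG.1.1.map_zero, add_sub_cancel, ← hF.1.commute_alpha_pow l₀ s,
    hG.1.commute_alpha_pow ν k, hF.lb_apply_eq_zero, smul_zero, add_zero, ← S.alpha_pow_add,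
    add_comm s, eq_comm] at key

lemma apply_der_lb_eq_zero (hS : IsHLCS S) (hF : IsZDer S k d F) (hG : IsDer S s d' G)
    (l₀ ν l : ℂ) (a b : R) : F l₀ (G ν (S.lb l a b)) = 0 := by
  refine eq_zero_of_forall_mem_eq_zero hS.internal.submodule_iSup_eq_top
    (fun x => F l₀ (G ν (S.lb l x b)))
    (fun x y => by simp only [S.lb_add_left, hG.1.1.map_add, hF.1.1.map_add]) ?_ a
  intro i x hx
  rw [hG.2 i x hx b ν l, hF.1.1.map_add, hF.1.1.map_smul, hF.apply_lb_eq_zero,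
    hF.apply_lb_eq_zero, smul_zero, add_zero]

lemma brkt (hS : IsHLCS S) (hF : IsZDer S k d F) (hG : IsDer S s d' G) (l₀ : ℂ) :
    IsZDer S (k + s) (d + d') (brkt ((-1 : ℂ) ^ (d * d').val) F G l₀) := by
  refine ⟨hF.1.brkt hG.1 _ l₀, fun a b l m => ⟨?_, ?_⟩⟩
  · rw [HLCS.brkt, S.lb_sub_left, S.lb_smul_left, hF.lb_der_apply_eq_zero hS hG, S.alpha_pow_add,
      hF.lb_apply_eq_zero, smul_zero, sub_zero]
  · rw [HLCS.brkt, hF.apply_der_lb_eq_zero hS hG, hF.apply_lb_eq_zero, hG.1.1.map_zero, smul_zero,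
      sub_zero]

end IsZDer

/-- For a multiplicative Hom-Lie conformal superalgebra `(R, α)`,
`ZDer(R)` is an ideal of `Der(R)`: the twist `α'(D₁) = D₁ ∘ α` sends
`ZDer_{α^k}(R)` into `ZDer_{α^{k+1}}(R)`, and the commutator of a central
derivation `D₁ ∈ ZDer_{α^k}(R)` with a derivation `D₂ ∈ Der_{α^s}(R)` lies in
`ZDer_{α^{k+s}}(R)[μ]`. -/
theorem zder_ideal (S : Data R) (hS : IsHLCS S) (hmult : S.Mult) :
    (∀ (k : ℕ) (d : ZMod 2) (F : ℂ → R → R),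
      IsZDer S k d F → IsZDer S (k + 1) d (tw S F)) ∧
    (∀ (k s : ℕ) (d d' : ZMod 2) (F G : ℂ → R → R),
      IsZDer S k d F → IsDer S s d' G →
        ∀ l : ℂ, IsZDer S (k + s) (d + d') (brkt ((-1 : ℂ) ^ ((d * d').val)) F G l)) :=
  ⟨fun _ _ _ hF => hF.tw hS hmult, fun _ _ _ _ _ _ hF hG l => hF.brkt hS hG l⟩

end HLCS
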